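/- arXiv:1812.01186 — 2 statements merged into one kernel-verified Lean document; each statement's English description precedes it below -/
import Mathlib

section
/- (KL decomposition under exponential tilting) Let q be a probability measure on a measurable space, Φ a measurable real-valued function with Z = ∫ e^{Φ} dq ∈ (0, ∞), and let p_Φ be the exponential tilting of q by Φ. Then for every probability measure ρ with ρ ≪ q and Φ integrable with respect to ρ, one has KL(ρ ‖ q) = KL(ρ ‖ p_Φ) + ∫ Φ dρ − log Z, where either both sides are finite or both are +∞. -/
open MeasureTheory Real

/-- Exponential tilting of a measure `q` by an energy `Φ`: the measure with density
`e^{Φ}/Z` with respect to `q`, where `Z = ∫ e^{Φ} dq`. -/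
noncomputable def expTilt {α : Type*} [MeasurableSpace α] (q : Measure α) (Φ : α → ℝ) :
    Measure α :=
  q.withDensity fun x => ENNReal.ofReal (exp (Φ x) / ∫ y, exp (Φ y) ∂q)

/-- Kullback–Leibler divergence `KL(ρ ‖ q) = ∫ log(dρ/dq) dρ` when `ρ ≪ q` and the
log-likelihood ratio is `ρ`-integrable, and `+∞` otherwise, as an extended real number. -/
noncomputable def klDiv' {α : Type*} [MeasurableSpace α] (ρ q : Measure α) : EReal :=
  open scoped Classical in
  if ρ ≪ q ∧ Integrable (llr ρ q) ρ then ((∫ x, llr ρ q x ∂ρ : ℝ) : EReal) else ⊤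

/-- KL decomposition under exponential tilting: for `Z = ∫ e^{Φ} dq ∈ (0, ∞)`
and `p_Φ` the exponential tilting of `q` by `Φ`, every probability measure `ρ ≪ q` with
`Φ` integrable w.r.t. `ρ` satisfies
`KL(ρ ‖ q) = KL(ρ ‖ p_Φ) + ∫ Φ dρ − log Z` (as extended reals, so either both sides are
finite or both are `+∞`). -/
theorem kl_decomposition_exp_tilt {α : Type*} [MeasurableSpace α]
    (q : Measure α) [IsProbabilityMeasure q] (Φ : α → ℝ) (hΦm : Measurable Φ)
    (hZint : Integrable (fun x => exp (Φ x)) q)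
    (hZpos : 0 < ∫ x, exp (Φ x) ∂q)
    (ρ : Measure α) [IsProbabilityMeasure ρ] (hρq : ρ ≪ q) (hΦρ : Integrable Φ ρ) :
    klDiv' ρ q
      = klDiv' ρ (expTilt q Φ)
        + ((∫ x, Φ x ∂ρ - log (∫ x, exp (Φ x) ∂q) : ℝ) : EReal) := by
  have hpt : expTilt q Φ = q.tilted Φ := rfl
  have hρp : ρ ≪ expTilt q Φ := by
    rw [hpt]
    exact hρq.trans (absolutelyContinuous_tilted hZint)
  have h_ae : llr ρ (expTilt q Φ)
      =ᵐ[ρ] fun x ↦ - Φ x + log (∫ z, exp (Φ z) ∂q) + llr ρ q x := by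
    rw [hpt]; exact llr_tilted_right hρq hZint
  by_cases hint : Integrable (llr ρ q) ρ
  · have hint' : Integrable (llr ρ (expTilt q Φ)) ρ := by
      rw [hpt]; exact integrable_llr_tilted_right hρq hΦρ hint hZint
    rw [klDiv', klDiv', if_pos ⟨hρq, hint⟩, if_pos ⟨hρp, hint'⟩]
    have hI : ∫ x, llr ρ (expTilt q Φ) x ∂ρ
        = ∫ x, llr ρ q x ∂ρ - ∫ x, Φ x ∂ρ + log (∫ x, exp (Φ x) ∂q) := by
      rw [hpt]; exact integral_llr_tilted_right hρq hΦρ hZint hint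
    rw [hI, ← EReal.coe_add]
    norm_num
  · have hint' : ¬ Integrable (llr ρ (expTilt q Φ)) ρ := by
      intro h
      apply hint
      have : llr ρ q =ᵐ[ρ] fun x ↦
          llr ρ (expTilt q Φ) x + Φ x - log (∫ z, exp (Φ z) ∂q) := by
        filter_upwards [h_ae] with x hx
        rw [hx]; ring
      rw [integrable_congr this]
      exact (h.add hΦρ).sub (integrable_const _)
    rw [klDiv', klDiv', if_neg (fun h => hint h.2), if_neg (fun h => hint' h.2)]
    rw [EReal.top_add_coe]
end

section
/- (Theorem 1, maximum-entropy characterization, finite form) Let q be a probability measure on a measurable space, Φ a measurable real-valued function with Z = ∫ e^{Φ} dq ∈ (0, ∞), and let p_Φ be the exponential tilting of q by Φ; assume Φ is integrable with respect to p_Φ and set α = ∫ Φ dp_Φ. Then among all probability measures ρ with ρ ≪ q, Φ integrable with respect to ρ, and satisfying the linear constraint ∫ Φ dρ = α, the tilted measure p_Φ minimizes KL(ρ ‖ q): every such ρ satisfies KL(ρ ‖ q) ≥ KL(p_Φ ‖ q), with equality if and only if ρ = p_Φ. -/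
open MeasureTheory Real

lemma phi_nonneg {t : ℝ} (ht : 0 ≤ t) : 0 ≤ t * log t - t + 1 := by
  rcases ht.eq_or_lt with h | h
  · simp [← h]
  · have h1 : log t⁻¹ ≤ t⁻¹ - 1 := log_le_sub_one_of_pos (inv_pos.2 h)
    rw [log_inv] at h1
    have := mul_le_mul_of_nonneg_left h1 h.le
    have ht' : t * t⁻¹ = 1 := mul_inv_cancel₀ h.ne'
    nlinarith

lemma phi_eq_zero_iff {t : ℝ} (ht : 0 ≤ t) : t * log t - t + 1 = 0 ↔ t = 1 := by
  constructor
  · intro h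
    by_contra hne
    rcases ht.eq_or_lt with h0 | h0
    · rw [← h0] at h; norm_num at h
    · have h1 : log t⁻¹ < t⁻¹ - 1 :=
        log_lt_sub_one_of_pos (inv_pos.2 h0) (fun h' => hne (inv_eq_one.mp h'))
      rw [log_inv] at h1
      have := mul_lt_mul_of_pos_left h1 h0
      have ht' : t * t⁻¹ = 1 := mul_inv_cancel₀ h0.ne'
      nlinarith
  · rintro rfl; simp

/-- Gibbs' inequality with the equality case: for probability measures `ρ ≪ p`,
`∫ llr ρ p dρ ≥ 0`, with equality iff `ρ = p`. -/
lemma gibbs_ineq {α : Type*} [MeasurableSpace α] {ρ p : Measure α}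
    [IsProbabilityMeasure ρ] [IsProbabilityMeasure p]
    (hρp : ρ ≪ p) (hint : Integrable (llr ρ p) ρ) :
    0 ≤ ∫ x, llr ρ p x ∂ρ ∧ (∫ x, llr ρ p x ∂ρ = 0 ↔ ρ = p) := by
  set g : α → ℝ := fun x => (ρ.rnDeriv p x).toReal with hg
  have hgnn : ∀ x, 0 ≤ g x := fun x => ENNReal.toReal_nonneg
  have h1 : ∫ x, g x * log (g x) ∂p = ∫ x, llr ρ p x ∂ρ := by
    rw [← integral_rnDeriv_smul hρp (f := llr ρ p)]
    rfl
  have hglogint : Integrable (fun x => g x * log (g x)) p := by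
    have := (integrable_rnDeriv_smul_iff hρp (f := llr ρ p)).mpr hint
    simpa [smul_eq_mul, llr_def] using this
  have hgint : Integrable g p := Measure.integrable_toReal_rnDeriv
  have hg1 : ∫ x, g x ∂p = 1 := by
    rw [Measure.integral_toReal_rnDeriv hρp]
    simp
  have hsub : Integrable (fun x => g x * log (g x) - g x) p := hglogint.sub hgint
  have hφint : Integrable (fun x => g x * log (g x) - g x + 1) p :=
    hsub.add (integrable_const 1)
  have hφval : ∫ x, (g x * log (g x) - g x + 1) ∂p = ∫ x, llr ρ p x ∂ρ := by
    rw [integral_add hsub (integrable_const 1),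
      integral_sub hglogint hgint, hg1, h1]
    simp
  have hφnn : 0 ≤ᵐ[p] fun x => g x * log (g x) - g x + 1 :=
    Filter.Eventually.of_forall fun x => phi_nonneg (hgnn x)
  constructor
  · rw [← hφval]
    exact integral_nonneg fun x => phi_nonneg (hgnn x)
  constructor
  · intro h
    have h0 : ∫ x, (g x * log (g x) - g x + 1) ∂p = 0 := by rw [hφval, h]
    have hae := (integral_eq_zero_iff_of_nonneg_ae hφnn hφint).mp h0
    have hgeq : g =ᵐ[p] fun _ => 1 := by
      filter_upwards [hae] with x hx
      exact (phi_eq_zero_iff (hgnn x)).mp hx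
    have hrn : ρ.rnDeriv p =ᵐ[p] fun _ => 1 := by
      filter_upwards [hgeq, Measure.rnDeriv_lt_top ρ p] with x hx hlt
      have : ((ρ.rnDeriv p x).toReal : ℝ) = 1 := hx
      rw [← ENNReal.ofReal_toReal hlt.ne, this]
      simp
    calc ρ = p.withDensity (ρ.rnDeriv p) := (Measure.withDensity_rnDeriv_eq ρ p hρp).symm
      _ = p.withDensity (fun _ => 1) := withDensity_congr_ae hrn
      _ = p := by simp
  · rintro rfl
    have : llr ρ ρ =ᵐ[ρ] fun _ => 0 := by
      filter_upwards [Measure.rnDeriv_self ρ] with x hx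
      simp [llr_def, hx]
    rw [integral_congr_ae this]
    simp

/-- Theorem 1, maximum-entropy characterization, finite form: with
`Z = ∫ e^{Φ} dq ∈ (0, ∞)`, `p_Φ` the exponential tilting of `q` by `Φ`, `Φ` integrable
w.r.t. `p_Φ` and `α₀ = ∫ Φ dp_Φ`, every probability measure `ρ ≪ q` with `Φ`
`ρ`-integrable and `∫ Φ dρ = α₀` satisfies `KL(ρ ‖ q) ≥ KL(p_Φ ‖ q)`, with equality if
and only if `ρ = p_Φ`. -/
theorem exp_tilt_max_entropy {α : Type*} [MeasurableSpace α]
    (q : Measure α) [IsProbabilityMeasure q] (Φ : α → ℝ) (hΦm : Measurable Φ)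
    (hZint : Integrable (fun x => exp (Φ x)) q)
    (hZpos : 0 < ∫ x, exp (Φ x) ∂q)
    (hΦp : Integrable Φ (expTilt q Φ)) :
    ∀ ρ : Measure α, IsProbabilityMeasure ρ → ρ ≪ q → Integrable Φ ρ →
      ∫ x, Φ x ∂ρ = ∫ x, Φ x ∂(expTilt q Φ) →
      klDiv' (expTilt q Φ) q ≤ klDiv' ρ q ∧
        (klDiv' ρ q = klDiv' (expTilt q Φ) q ↔ ρ = expTilt q Φ) := by
  have hpt : expTilt q Φ = q.tilted Φ := rfl
  rw [hpt] at hΦp ⊢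
  intro ρ hρprob hρq hΦρ hconstr
  set Z : ℝ := ∫ x, exp (Φ x) ∂q with hZ
  haveI hp : IsProbabilityMeasure (q.tilted Φ) := isProbabilityMeasure_tilted hZint
  have hpq : q.tilted Φ ≪ q := tilted_absolutelyContinuous q Φ
  have hqp : q ≪ q.tilted Φ := absolutelyContinuous_tilted hZint
  have hllrp : llr (q.tilted Φ) q =ᵐ[q] fun x => Φ x - log Z :=
    log_rnDeriv_tilted_left_self hZint
  have hllrp' : llr (q.tilted Φ) q =ᵐ[q.tilted Φ] fun x => Φ x - log Z :=
    hllrp.filter_mono hpq.ae_le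
  have h_int_p : Integrable (llr (q.tilted Φ) q) (q.tilted Φ) := by
    rw [integrable_congr hllrp']
    exact hΦp.sub (integrable_const _)
  have hKLp : ∫ x, llr (q.tilted Φ) q x ∂(q.tilted Φ)
      = ∫ x, Φ x ∂(q.tilted Φ) - log Z := by
    rw [integral_congr_ae hllrp', integral_sub hΦp (integrable_const _)]
    simp
  have klp_eq : klDiv' (q.tilted Φ) q
      = ((∫ x, Φ x ∂(q.tilted Φ) - log Z : ℝ) : EReal) := by
    rw [klDiv', if_pos ⟨hpq, h_int_p⟩, hKLp]
  by_cases hint : Integrable (llr ρ q) ρ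
  · have hρp : ρ ≪ q.tilted Φ := hρq.trans hqp
    have hintρp : Integrable (llr ρ (q.tilted Φ)) ρ :=
      integrable_llr_tilted_right hρq hΦρ hint hZint
    have hval : ∫ x, llr ρ (q.tilted Φ) x ∂ρ
        = ∫ x, llr ρ q x ∂ρ - ∫ x, Φ x ∂ρ + log Z :=
      integral_llr_tilted_right hρq hΦρ hZint hint
    obtain ⟨hge, hiff⟩ := gibbs_ineq hρp hintρp
    have klρ_eq : klDiv' ρ q = ((∫ x, llr ρ q x ∂ρ : ℝ) : EReal) := by
      rw [klDiv', if_pos ⟨hρq, hint⟩]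
    rw [klρ_eq, klp_eq]
    constructor
    · rw [EReal.coe_le_coe_iff]
      linarith [hconstr]
    · rw [EReal.coe_eq_coe_iff]
      constructor
      · intro h
        apply hiff.mp
        linarith [hconstr]
      · intro h
        have h0 := hiff.mpr h
        linarith [hconstr]
  · have klρ_eq : klDiv' ρ q = ⊤ := by
      rw [klDiv', if_neg (fun h => hint h.2)]
    rw [klρ_eq, klp_eq]
    refine ⟨le_top, ?_⟩
    constructor
    · intro h
      exact absurd h.symm (EReal.coe_ne_top _)
    · intro h
      exfalso
      rw [h] at hint
      exact hint h_int_p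
end
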